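/- Let $E_1,\dots,E_n,F$ be Banach spaces (over the real or complex field), $1<p<\infty$, $1/p+1/p^*=1$, and $T:E_1\times\cdots\times E_n\to F$ a bounded $n$-linear operator. The following are equivalent: (i) for all sequences $(x_j^{(k)})_{j=1}^\infty$ in $E_k$ with $\sum_{j=1}^\infty\|x_j^{(k)}\|^{p}<\infty$ for $k=1,\dots,n$, the multi-indexed family $(T(x_{j_1}^{(1)},\dots,x_{j_n}^{(n)}))_{(j_1,\dots,j_n)\in\mathbb{N}^n}$ is Cohen strongly $p$-summing in $F$, i.e. $\sum_{(j_1,\dots,j_n)\in\mathbb{N}^n}|\varphi_{j_1,\dots,j_n}(T(x_{j_1}^{(1)},\dots,x_{j_n}^{(n)}))|<\infty$ for every family $(\varphi_{j_1,\dots,j_n})$ in $F'$ with $\sup_{y\in B_F}\sum_{(j_1,\dots,j_n)\in\mathbb{N}^n}|\varphi_{j_1,\dots,j_n}(y)|^{p^*}<\infty$; (ii) there exists $C>0$ such that $\sum_{j_1,\dots,j_n=1}^m|\varphi_{j_1,\dots,j_n}(T(x_{j_1}^{(1)},\dots,x_{j_n}^{(n)}))|\le C\,\prod_{k=1}^n(\sum_{j=1}^m\|x_j^{(k)}\|^{p})^{1/p}\,\|(\varphi_{j_1,\dots,j_n})_{j_1,\dots,j_n=1}^m\|_{w,p^*}$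 for all $m\in\mathbb{N}$, all $x_j^{(k)}\in E_k$ and all $\varphi_{j_1,\dots,j_n}\in F'$. -/

import Mathlib

open scoped BigOperators

/-- The weak `q`-norm of a finite family of continuous linear functionals on `F`. -/
noncomputable def weakNorm {𝕜 F : Type*} [RCLike 𝕜] [NormedAddCommGroup F] [NormedSpace 𝕜 F]
    {ι : Type*} [Fintype ι] (q : ℝ) (φ : ι → F →L[𝕜] 𝕜) : ℝ :=
  ⨆ y : Metric.closedBall (0 : F) 1, (∑ i, ‖φ i (y : F)‖ ^ q) ^ (1 / q)

/-!
(ii) ⇒ (i) is immediate, one finite box `Fin n → Fin M` at a time. For (i) ⇒ (ii): both sides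
of (ii) are homogeneous in each sequence `x⁽ᵏ⁾` and in `φ`, so (ii) amounts to a uniform bound
for data normalized by `∑ⱼ ‖xⱼ⁽ᵏ⁾‖ᵖ ≤ 1` and `‖φ‖_{w,p*} ≤ 1`. If there were none, choose
normalized blocks whose sums exceed `2^{N(n+1)} N`, scale the `N`-th block by `2⁻ᴺ` and put the
blocks on the diagonal of `(Σ N, Fin m_N)ⁿ`. The glued sequences are still `p`-summable and the
glued functionals still weakly `p*`-summable, while block `N` alone contributes more than `N`;
this contradicts (i), which holds for any countable index set as soon as it holds for `ℕ`.
-/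

open Function Metric

section WeakNorm

variable {𝕜 F ι : Type*} [RCLike 𝕜] [NormedAddCommGroup F] [NormedSpace 𝕜 F] [Fintype ι]
  {q : ℝ}

lemma weakNorm_bddAbove (hq : 0 < q) (φ : ι → F →L[𝕜] 𝕜) :
    BddAbove (Set.range fun y : closedBall (0 : F) 1 => (∑ i, ‖φ i (y : F)‖ ^ q) ^ (1 / q)) := by
  refine ⟨(∑ i, ‖φ i‖ ^ q) ^ (1 / q), ?_⟩
  rintro _ ⟨y, rfl⟩
  have hy : ‖(y : F)‖ ≤ 1 := mem_closedBall_zero_iff.mp y.2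
  refine Real.rpow_le_rpow (by positivity) (Finset.sum_le_sum fun i _ => ?_) (by positivity)
  refine Real.rpow_le_rpow (norm_nonneg _) ?_ hq.le
  calc ‖φ i y‖ ≤ ‖φ i‖ * ‖(y : F)‖ := (φ i).le_opNorm _
    _ ≤ ‖φ i‖ := mul_le_of_le_one_right (norm_nonneg _) hy

lemma rpow_sum_le_weakNorm (hq : 0 < q) (φ : ι → F →L[𝕜] 𝕜) {y : F}
    (hy : y ∈ closedBall (0 : F) 1) : (∑ i, ‖φ i y‖ ^ q) ^ (1 / q) ≤ weakNorm q φ :=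
  le_ciSup (weakNorm_bddAbove hq φ) ⟨y, hy⟩

lemma sum_rpow_le_weakNorm_rpow (hq : 0 < q) (φ : ι → F →L[𝕜] 𝕜) {y : F}
    (hy : y ∈ closedBall (0 : F) 1) : ∑ i, ‖φ i y‖ ^ q ≤ weakNorm q φ ^ q := by
  calc ∑ i, ‖φ i y‖ ^ q = ((∑ i, ‖φ i y‖ ^ q) ^ (1 / q)) ^ q := by
        rw [one_div, Real.rpow_inv_rpow (by positivity) hq.ne']
    _ ≤ weakNorm q φ ^ q := by gcongr; exact rpow_sum_le_weakNorm hq φ hy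

lemma weakNorm_nonneg (hq : 0 < q) (φ : ι → F →L[𝕜] 𝕜) : 0 ≤ weakNorm q φ :=
  (Real.rpow_nonneg (by positivity) _).trans
    (rpow_sum_le_weakNorm hq φ (mem_closedBall_self zero_le_one))

lemma weakNorm_le {φ : ι → F →L[𝕜] 𝕜} {c : ℝ}
    (h : ∀ y ∈ closedBall (0 : F) 1, (∑ i, ‖φ i y‖ ^ q) ^ (1 / q) ≤ c) : weakNorm q φ ≤ c :=
  have : Nonempty (closedBall (0 : F) 1) := ⟨⟨0, mem_closedBall_self zero_le_one⟩⟩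
  ciSup_le fun y => h y y.2

lemma norm_le_weakNorm (hq : 0 < q) (φ : ι → F →L[𝕜] 𝕜) (i : ι) : ‖φ i‖ ≤ weakNorm q φ := by
  refine ContinuousLinearMap.opNorm_le_of_unit_norm (weakNorm_nonneg hq φ) fun y hy => ?_
  calc ‖φ i y‖ = (‖φ i y‖ ^ q) ^ (1 / q) := by
        rw [one_div, Real.rpow_rpow_inv (norm_nonneg _) hq.ne']
    _ ≤ (∑ j, ‖φ j y‖ ^ q) ^ (1 / q) := by
        gcongr
        exact Finset.single_le_sum (f := fun j => ‖φ j y‖ ^ q) (fun j _ => by positivity)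
          (Finset.mem_univ i)
    _ ≤ weakNorm q φ := rpow_sum_le_weakNorm hq φ (mem_closedBall_zero_iff.mpr hy.le)

lemma weakNorm_smul (hq : 0 < q) (c : 𝕜) (φ : ι → F →L[𝕜] 𝕜) :
    weakNorm q (fun i => c • φ i) = ‖c‖ * weakNorm q φ := by
  simp only [weakNorm, Real.mul_iSup_of_nonneg (norm_nonneg c)]
  congr 1 with y
  simp only [FunLike.coe_smul, Pi.smul_apply, norm_smul]
  simp_rw [Real.mul_rpow (norm_nonneg c) (norm_nonneg _), ← Finset.mul_sum]
  rw [Real.mul_rpow (by positivity) (by positivity), ← Real.rpow_mul (norm_nonneg c),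
    mul_one_div_cancel hq.ne', Real.rpow_one]

end WeakNorm

section Scaling

variable {𝕜 G : Type*} [RCLike 𝕜] [NormedAddCommGroup G] [NormedSpace 𝕜 G] {p : ℝ}

lemma sum_norm_smul_rpow {ι : Type*} [Fintype ι] (c : 𝕜) (x : ι → G) :
    ∑ j, ‖c • x j‖ ^ p = ‖c‖ ^ p * ∑ j, ‖x j‖ ^ p := by
  simp_rw [norm_smul, Real.mul_rpow (norm_nonneg c) (norm_nonneg _), Finset.mul_sum]

lemma summable_sigma_norm_smul_rpow {m : ℕ → ℕ} (c : ℕ → 𝕜) (x : ∀ N, Fin (m N) → G)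
    (hx : ∀ N, ∑ i, ‖x N i‖ ^ p ≤ 1) (hc : Summable fun N => ‖c N‖ ^ p) :
    Summable fun σ : Σ N, Fin (m N) => ‖c σ.1 • x σ.1 σ.2‖ ^ p := by
  refine (summable_sigma_of_nonneg fun σ => by positivity).mpr
    ⟨fun N => Summable.of_finite, hc.of_nonneg_of_le (fun N => by positivity) fun N => ?_⟩
  rw [tsum_fintype]
  exact (sum_norm_smul_rpow (c N) (x N)).trans_le (mul_le_of_le_one_right (by positivity) (hx N))

end Scaling

section MultipleSumming

variable {𝕜 F : Type*} [RCLike 𝕜] [NormedAddCommGroup F] [NormedSpace 𝕜 F]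
  {n : ℕ} {E : Fin n → Type*} [∀ k, NormedAddCommGroup (E k)] [∀ k, NormedSpace 𝕜 (E k)]
  (T : ContinuousMultilinearMap 𝕜 E F) {p q : ℝ}

noncomputable def cohenSum {ι : Type*} [Fintype ι] (x : ∀ k, ι → E k)
    (φ : (Fin n → ι) → F →L[𝕜] 𝕜) : ℝ :=
  ∑ α, ‖φ α (T fun k => x k (α k))‖

/-- Condition (i), for sequences indexed by an arbitrary type `ι`. -/
def IsMultipleCohenSumming (p q : ℝ) (ι : Type*) : Prop :=
  ∀ x : ∀ k, ι → E k, (∀ k, Summable fun j => ‖x k j‖ ^ p) →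
    ∀ φ : (Fin n → ι) → F →L[𝕜] 𝕜,
      (∃ C : ℝ, ∀ y ∈ closedBall (0 : F) 1, ∀ s : Finset (Fin n → ι), ∑ α ∈ s, ‖φ α y‖ ^ q ≤ C) →
      Summable fun α : Fin n → ι => ‖φ α (T fun k => x k (α k))‖

variable {T}

section Finite

variable {ι : Type*} [Fintype ι] {x : ∀ k, ι → E k} {φ : (Fin n → ι) → F →L[𝕜] 𝕜}

lemma cohenSum_smul (c : Fin n → 𝕜) (d : 𝕜) :
    cohenSum T (fun k j => c k • x k j) (fun α => d • φ α) =
      ‖d‖ * (∏ k, ‖c k‖) * cohenSum T x φ := by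
  simp only [cohenSum, Finset.mul_sum, T.map_smul_univ, FunLike.coe_smul, Pi.smul_apply, map_smul,
    norm_smul, norm_prod]
  exact Finset.sum_congr rfl fun α _ => by ring

lemma cohenSum_eq_zero_of_weakNorm_eq_zero (hq : 0 < q) (h : weakNorm q φ = 0) :
    cohenSum T x φ = 0 := by
  have hφ : ∀ α, φ α = 0 := fun α => norm_le_zero_iff.mp (h ▸ norm_le_weakNorm hq φ α)
  simp [cohenSum, hφ]

lemma cohenSum_eq_zero_of_sum_rpow_eq_zero (hp : p ≠ 0) (k : Fin n)
    (h : ∑ j, ‖x k j‖ ^ p = 0) : cohenSum T x φ = 0 := by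
  have hx : ∀ j, x k j = 0 := fun j => by
    have := (Finset.sum_eq_zero_iff_of_nonneg fun j _ => by positivity).mp h j (Finset.mem_univ j)
    simpa using (Real.rpow_eq_zero (norm_nonneg _) hp).mp this
  exact Finset.sum_eq_zero fun α _ => by
    rw [T.map_coord_zero (m := fun k => x k (α k)) k (hx (α k)), map_zero, norm_zero]

end Finite

lemma exists_cohenSum_le_of_normalized (hp : 0 < p) (hq : 0 < q) {K : ℝ}
    (hK : ∀ (m : ℕ) (x : ∀ k, Fin m → E k) (φ : (Fin n → Fin m) → F →L[𝕜] 𝕜),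
      (∀ k, ∑ j, ‖x k j‖ ^ p ≤ 1) → weakNorm q φ ≤ 1 → cohenSum T x φ ≤ K) :
    ∃ C > 0, ∀ (m : ℕ) (x : ∀ k, Fin m → E k) (φ : (Fin n → Fin m) → F →L[𝕜] 𝕜),
      cohenSum T x φ ≤ C * (∏ k, (∑ j, ‖x k j‖ ^ p) ^ (1 / p)) * weakNorm q φ := by
  refine ⟨max K 1, by positivity, fun m x φ => ?_⟩
  set t : Fin n → ℝ := fun k => (∑ j, ‖x k j‖ ^ p) ^ (1 / p)
  have ht : ∀ k, 0 ≤ t k := fun k => by positivity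
  have hW := weakNorm_nonneg hq φ
  by_cases hzero : (∃ k, t k = 0) ∨ weakNorm q φ = 0
  · have : cohenSum T x φ = 0 := by
      rcases hzero with ⟨k, hk⟩ | hW0
      · exact cohenSum_eq_zero_of_sum_rpow_eq_zero hp.ne' k
          ((Real.rpow_eq_zero (by positivity) (by positivity)).mp hk)
      · exact cohenSum_eq_zero_of_weakNorm_eq_zero hq hW0
    rw [this]
    have := Finset.prod_nonneg fun k (_ : k ∈ Finset.univ) => ht k
    positivity
  push Not at hzero
  obtain ⟨ht0, hW0⟩ := hzero
  have hnorm : ∀ k, ∑ j, ‖((t k)⁻¹ : 𝕜) • x k j‖ ^ p ≤ 1 := fun k => by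
    have hsum : ∑ j, ‖x k j‖ ^ p = t k ^ p := by
      simp only [t, one_div]
      rw [Real.rpow_inv_rpow (by positivity) hp.ne']
    rw [sum_norm_smul_rpow, norm_inv, RCLike.norm_ofReal, abs_of_nonneg (ht k), hsum,
      ← Real.mul_rpow (by positivity) (ht k), inv_mul_cancel₀ (ht0 k), Real.one_rpow]
  have hφ : weakNorm q (fun α => ((weakNorm q φ)⁻¹ : 𝕜) • φ α) ≤ 1 := by
    rw [weakNorm_smul hq, norm_inv, RCLike.norm_ofReal, abs_of_nonneg hW, inv_mul_cancel₀ hW0]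
  have := hK m _ _ hnorm hφ
  simp only [cohenSum_smul, norm_inv, RCLike.norm_ofReal, abs_of_nonneg hW,
    abs_of_nonneg (ht _), Finset.prod_inv_distrib, ← mul_inv] at this
  have hpos : 0 < weakNorm q φ * ∏ k, t k :=
    mul_pos (hW.lt_of_ne' hW0) (Finset.prod_pos fun k _ => (ht k).lt_of_ne' (ht0 k))
  rw [inv_mul_le_iff₀ hpos] at this
  calc cohenSum T x φ ≤ weakNorm q φ * (∏ k, t k) * K := this
    _ ≤ weakNorm q φ * (∏ k, t k) * max K 1 := by gcongr; exact le_max_left K 1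
    _ = max K 1 * (∏ k, t k) * weakNorm q φ := by ring

lemma IsMultipleCohenSumming.of_injective (hp : p ≠ 0) (hq : q ≠ 0) {ι κ : Type*} {e : ι → κ}
    (he : Injective e) (hT : IsMultipleCohenSumming T p q κ) :
    IsMultipleCohenSumming T p q ι := by
  intro x hx φ ⟨C, hC⟩
  have he' : Injective fun α : Fin n → ι => e ∘ α := he.comp_left
  set x' : ∀ k, κ → E k := fun k => extend e (x k) 0
  set φ' : (Fin n → κ) → F →L[𝕜] 𝕜 := extend (e ∘ ·) φ 0
  have hx' : ∀ k, Summable fun j => ‖x' k j‖ ^ p := fun k => by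
    refine (he.summable_iff fun j hj => ?_).mp ?_
    · simp [x', extend_apply' _ _ _ (by simpa using hj), Real.zero_rpow hp]
    · simpa [comp_def, x', he.extend_apply] using hx k
  have hφ' : ∀ y ∈ closedBall (0 : F) 1, ∀ s, ∑ γ ∈ s, ‖φ' γ y‖ ^ q ≤ C := fun y hy s => by
    rw [← Finset.sum_preimage _ s he'.injOn]
    · simpa [φ', he'.extend_apply] using hC y hy _
    · intro γ _ hγ
      simp [φ', extend_apply' _ _ _ (by simpa using hγ), Real.zero_rpow hq]
  have := (he'.summable_iff fun γ hγ => ?_).mpr (hT x' hx' φ' ⟨C, hφ'⟩)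
  · convert this using 2 with α
    simp only [comp_apply, φ', x', he'.extend_apply, he.extend_apply]
  · simp [φ', extend_apply' _ _ _ (by simpa using hγ)]

lemma isMultipleCohenSumming_nat_of_cohenSum_le (hp : 0 < p) (hq : 0 < q) {C : ℝ} (hC : 0 ≤ C)
    (h : ∀ (m : ℕ) (x : ∀ k, Fin m → E k) (φ : (Fin n → Fin m) → F →L[𝕜] 𝕜),
      cohenSum T x φ ≤ C * (∏ k, (∑ j, ‖x k j‖ ^ p) ^ (1 / p)) * weakNorm q φ) :
    IsMultipleCohenSumming T p q ℕ := by
  intro x hx φ ⟨D, hD⟩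
  refine summable_of_sum_le (c := C * (∏ k, (∑' j, ‖x k j‖ ^ p) ^ (1 / p)) * D ^ (1 / q))
    (fun α => norm_nonneg _) fun s => ?_
  obtain ⟨M, hM⟩ := (s.biUnion fun α => Finset.univ.image α).exists_nat_subset_range
  set box : (Fin n → Fin M) → Fin n → ℕ := fun β k => β k
  have hbox : Injective box := Fin.val_injective.comp_left
  have hs : s ⊆ Finset.univ.image box := fun α hα => by
    have hαM : ∀ k, α k < M := fun k => Finset.mem_range.mp <| hM <|
      Finset.mem_biUnion.mpr ⟨α, hα, Finset.mem_image_of_mem α (Finset.mem_univ k)⟩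
    exact Finset.mem_image.mpr ⟨fun k => ⟨α k, hαM k⟩, Finset.mem_univ _, rfl⟩
  have hW : weakNorm q (φ ∘ box) ≤ D ^ (1 / q) := weakNorm_le fun y hy => by
    gcongr
    exact (Finset.sum_image (f := fun α => ‖φ α y‖ ^ q) hbox.injOn).symm.trans_le (hD y hy _)
  have hx : ∀ k, ∑ j : Fin M, ‖x k j‖ ^ p ≤ ∑' j, ‖x k j‖ ^ p := fun k => by
    rw [Fin.sum_univ_eq_sum_range (fun j => ‖x k j‖ ^ p)]
    exact (hx k).sum_le_tsum _ fun j _ => by positivity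
  calc ∑ α ∈ s, ‖φ α (T fun k => x k (α k))‖
      ≤ ∑ α ∈ Finset.univ.image box, ‖φ α (T fun k => x k (α k))‖ :=
        Finset.sum_le_sum_of_subset_of_nonneg hs fun _ _ _ => norm_nonneg _
    _ = cohenSum T (fun k (j : Fin M) => x k j) (φ ∘ box) := Finset.sum_image hbox.injOn
    _ ≤ C * (∏ k, (∑ j : Fin M, ‖x k j‖ ^ p) ^ (1 / p)) * weakNorm q (φ ∘ box) := h _ _ _
    _ ≤ C * (∏ k, (∑' j, ‖x k j‖ ^ p) ^ (1 / p)) * D ^ (1 / q) := by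
        have := weakNorm_nonneg hq (φ ∘ box)
        gcongr with k
        exact hx k

section BlockDiagonal

variable {m : ℕ → ℕ}

def sigmaDiag : (Σ N, Fin n → Fin (m N)) → Fin n → Σ N, Fin (m N) :=
  fun σ k => ⟨σ.1, σ.2 k⟩

lemma sigmaDiag_injective (hn : 0 < n) : Injective (sigmaDiag (n := n) (m := m)) := by
  rintro ⟨N, β⟩ ⟨N', β'⟩ h
  obtain rfl : N = N' := congrArg Sigma.fst (congrFun h ⟨0, hn⟩)
  simp only [sigmaDiag, funext_iff, Sigma.mk.injEq, heq_eq_eq, true_and] at h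
  rw [funext h]

lemma sum_extend_sigmaDiag_rpow_le (hn : 0 < n) (hq : 0 < q) (c : ℕ → 𝕜)
    (φ : ∀ N, (Fin n → Fin (m N)) → F →L[𝕜] 𝕜) (hφ : ∀ N, weakNorm q (φ N) ≤ 1)
    (hc : Summable fun N => ‖c N‖ ^ q) {y : F} (hy : y ∈ closedBall (0 : F) 1)
    (s : Finset (Fin n → Σ N, Fin (m N))) :
    ∑ α ∈ s, ‖extend sigmaDiag (fun σ => c σ.1 • φ σ.1 σ.2) 0 α y‖ ^ q ≤ ∑' N, ‖c N‖ ^ q := by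
  have hinj := sigmaDiag_injective (m := m) hn
  rw [← Finset.sum_preimage _ s hinj.injOn]
  swap
  · intro α _ hα
    simp [extend_apply' _ _ _ hα, Real.zero_rpow hq.ne']
  simp only [hinj.extend_apply]
  generalize s.preimage sigmaDiag hinj.injOn = P
  set Q : Finset (Σ N, Fin n → Fin (m N)) := (P.image Sigma.fst).sigma fun _ => Finset.univ
    with hQ
  have hP : P ⊆ Q := fun σ hσ =>
    Finset.mem_sigma.mpr ⟨Finset.mem_image_of_mem _ hσ, Finset.mem_univ _⟩
  calc ∑ σ ∈ P, ‖(c σ.1 • φ σ.1 σ.2) y‖ ^ q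
      ≤ ∑ σ ∈ Q, ‖(c σ.1 • φ σ.1 σ.2) y‖ ^ q :=
        Finset.sum_le_sum_of_subset_of_nonneg hP fun _ _ _ => by positivity
    _ = ∑ N ∈ P.image Sigma.fst, ‖c N‖ ^ q * ∑ β, ‖φ N β y‖ ^ q := by
        rw [hQ, Finset.sum_sigma]
        exact Finset.sum_congr rfl fun N _ => sum_norm_smul_rpow (c N) (fun β => φ N β y)
    _ ≤ ∑ N ∈ P.image Sigma.fst, ‖c N‖ ^ q := by
        gcongr with N
        refine mul_le_of_le_one_right (by positivity) ?_
        calc ∑ β, ‖φ N β y‖ ^ q ≤ weakNorm q (φ N) ^ q := sum_rpow_le_weakNorm_rpow hq _ hy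
          _ ≤ 1 := Real.rpow_le_one (weakNorm_nonneg hq _) (hφ N) hq.le
    _ ≤ ∑' N, ‖c N‖ ^ q := hc.sum_le_tsum _ fun _ _ => by positivity

lemma cohenSum_le_tsum_extend_sigmaDiag (hn : 0 < n) (X : ∀ k, (Σ N, Fin (m N)) → E k)
    (ψ : (Σ N, Fin n → Fin (m N)) → F →L[𝕜] 𝕜)
    (hsum : Summable fun α => ‖extend sigmaDiag ψ 0 α (T fun k => X k (α k))‖) (N : ℕ) :
    cohenSum T (fun k i => X k ⟨N, i⟩) (fun β => ψ ⟨N, β⟩) ≤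
      ∑' α, ‖extend sigmaDiag ψ 0 α (T fun k => X k (α k))‖ := by
  have hinj := sigmaDiag_injective (m := m) hn
  have := hsum.sum_le_tsum (Finset.univ.map ((Embedding.sigmaMk N).trans ⟨_, hinj⟩))
    fun _ _ => norm_nonneg _
  simpa [cohenSum, Finset.sum_map, hinj.extend_apply, sigmaDiag] using this

end BlockDiagonal

lemma exists_normalized_cohenSum_le (hn : 0 < n) (hp : 0 < p) (hq : 0 < q)
    (hT : IsMultipleCohenSumming T p q ℕ) :
    ∃ K, ∀ (m : ℕ) (x : ∀ k, Fin m → E k) (φ : (Fin n → Fin m) → F →L[𝕜] 𝕜),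
      (∀ k, ∑ j, ‖x k j‖ ^ p ≤ 1) → weakNorm q φ ≤ 1 → cohenSum T x φ ≤ K := by
  by_contra! h
  choose m x φ hx hφ hS using fun N : ℕ => h (2 ^ (N * (n + 1)) * N)
  set c : ℕ → 𝕜 := fun N => 2⁻¹ ^ N
  have hc : ∀ N, ‖c N‖ = 2⁻¹ ^ N := fun N => by simp [c]
  have hc_summable : ∀ r : ℝ, 0 < r → Summable fun N => ‖c N‖ ^ r := fun r hr => by
    simp_rw [hc, ← Real.rpow_pow_comm (by norm_num : (0 : ℝ) ≤ 2⁻¹)]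
    exact summable_geometric_of_lt_one (by positivity)
      (Real.rpow_lt_one (by norm_num) (by norm_num) hr)
  obtain ⟨e, he⟩ := exists_injective_nat (Σ N, Fin (m N))
  set X : ∀ k, (Σ N, Fin (m N)) → E k := fun k σ => c σ.1 • x σ.1 k σ.2
  set Φ := extend sigmaDiag (fun σ : Σ N, Fin n → Fin (m N) => c σ.1 • φ σ.1 σ.2) 0
  have hsum := hT.of_injective hp.ne' hq.ne' he X
    (fun k => summable_sigma_norm_smul_rpow c (x · k) (hx · k) (hc_summable p hp))
    Φ ⟨_, fun y hy s => sum_extend_sigmaDiag_rpow_le hn hq c φ hφ (hc_summable q hq) hy s⟩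
  obtain ⟨N, hN⟩ := exists_nat_gt (∑' α, ‖Φ α (T fun k => X k (α k))‖)
  have hblock := cohenSum_le_tsum_extend_sigmaDiag hn X _ hsum N
  have hscale := cohenSum_smul (T := T) (x := x N) (φ := φ N) (fun _ => c N) (c N)
  have hweight : ‖c N‖ * ∏ _k : Fin n, ‖c N‖ = (2 ^ (N * (n + 1)))⁻¹ := by
    rw [hc, Finset.prod_const, Finset.card_univ, Fintype.card_fin, ← pow_succ', ← pow_mul,
      inv_pow]
  have hsmall : (2 ^ (N * (n + 1)))⁻¹ * cohenSum T (x N) (φ N) < N :=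
    hweight ▸ (hscale.symm.trans_le hblock).trans_lt hN
  have hlarge := mul_lt_mul_of_pos_left (hS N)
    (by positivity : (0 : ℝ) < (2 ^ (N * (n + 1)))⁻¹)
  rw [← mul_assoc, inv_mul_cancel₀ (by positivity), one_mul] at hlarge
  exact hlarge.asymm hsmall

end MultipleSumming

theorem stmt8_general {𝕜 : Type*} [RCLike 𝕜] {n : ℕ} (hn : 0 < n)
    {E : Fin n → Type*} [∀ k, NormedAddCommGroup (E k)] [∀ k, NormedSpace 𝕜 (E k)]
    {F : Type*} [NormedAddCommGroup F] [NormedSpace 𝕜 F]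
    (p q : ℝ) (hp : 1 < p) (hq : 1 / p + 1 / q = 1)
    (T : ContinuousMultilinearMap 𝕜 E F) :
    (∀ x : ∀ k, ℕ → E k, (∀ k, Summable (fun j => ‖x k j‖ ^ p)) →
      ∀ φ : (Fin n → ℕ) → F →L[𝕜] 𝕜,
        (∃ C : ℝ, ∀ y ∈ Metric.closedBall (0 : F) 1, ∀ s : Finset (Fin n → ℕ),
            ∑ α ∈ s, ‖φ α y‖ ^ q ≤ C) →
        Summable (fun α : Fin n → ℕ => ‖φ α (T (fun k => x k (α k)))‖))
    ↔ (∃ C > 0, ∀ (m : ℕ) (x : ∀ k, Fin m → E k) (φ : (Fin n → Fin m) → F →L[𝕜] 𝕜),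
        ∑ α : Fin n → Fin m, ‖φ α (T (fun k => x k (α k)))‖ ≤
          C * (∏ k, (∑ j, ‖x k j‖ ^ p) ^ (1 / p)) * weakNorm q φ) := by
  have hpq : p.HolderConjugate q :=
    Real.holderConjugate_iff.mpr ⟨hp, by simpa only [one_div] using hq⟩
  constructor
  · intro hT
    obtain ⟨K, hK⟩ := exists_normalized_cohenSum_le hn hpq.pos hpq.symm.pos hT
    exact exists_cohenSum_le_of_normalized hpq.pos hpq.symm.pos hK
  · rintro ⟨C, hC, hbound⟩
    exact isMultipleCohenSumming_nat_of_cohenSum_le hpq.pos hpq.symm.pos hC.le hbound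

/-- A bounded `n`-linear operator `T` is multiple Cohen strongly `p`-summing (it maps
`n`-tuples of absolutely `p`-summable sequences to Cohen strongly `p`-summing multi-indexed
families) iff the multiple Cohen summing inequality holds. -/
theorem stmt8 {𝕜 : Type*} [RCLike 𝕜] {n : ℕ} (hn : 0 < n)
    {E : Fin n → Type*} [∀ k, NormedAddCommGroup (E k)] [∀ k, NormedSpace 𝕜 (E k)]
    [∀ k, CompleteSpace (E k)]
    {F : Type*} [NormedAddCommGroup F] [NormedSpace 𝕜 F] [CompleteSpace F]
    (p q : ℝ) (hp : 1 < p) (hq : 1 / p + 1 / q = 1)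
    (T : ContinuousMultilinearMap 𝕜 E F) :
    (∀ x : ∀ k, ℕ → E k, (∀ k, Summable (fun j => ‖x k j‖ ^ p)) →
      ∀ φ : (Fin n → ℕ) → F →L[𝕜] 𝕜,
        (∃ C : ℝ, ∀ y ∈ Metric.closedBall (0 : F) 1, ∀ s : Finset (Fin n → ℕ),
            ∑ α ∈ s, ‖φ α y‖ ^ q ≤ C) →
        Summable (fun α : Fin n → ℕ => ‖φ α (T (fun k => x k (α k)))‖))
    ↔ (∃ C > 0, ∀ (m : ℕ) (x : ∀ k, Fin m → E k) (φ : (Fin n → Fin m) → F →L[𝕜] 𝕜),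
        ∑ α : Fin n → Fin m, ‖φ α (T (fun k => x k (α k)))‖ ≤
          C * (∏ k, (∑ j, ‖x k j‖ ^ p) ^ (1 / p)) * weakNorm q φ) :=
  stmt8_general hn p q hp hq T
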